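/- The marked Gromov-Prohorov distance satisfies the triangle inequality: for any three I-marked metric measure spaces (X₁, r₁, μ₁), (X₂, r₂, μ₂), (X₃, r₃, μ₃), one has d_MGP((X₁,r₁,μ₁),(X₃,r₃,μ₃)) ≤ d_MGP((X₁,r₁,μ₁),(X₂,r₂,μ₂)) + d_MGP((X₂,r₂,μ₂),(X₃,r₃,μ₃)). -/

import Mathlib

/-! Glue the two ambient spaces along the common copy of `X₂`: if `X₁, X₂` sit isometrically in
`Z` and `X₂, X₃` in `W`, gluing `Z` and `W` along the two images of `X₂` gives one separable
metric space containing all three. There the Prohorov distance satisfies the triangle inequality,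
and pushing measures forward along isometric embeddings does not increase it; taking infima over
`Z` and `W` gives the claim. -/

open MeasureTheory Topology Filter NNReal BoundedContinuousFunction

noncomputable section

/-- The index set `{(i,j) ∈ ℕ × ℕ : i < j}`, indexing the entries of a distance matrix. -/
abbrev PairIdx : Type := {p : ℕ × ℕ // p.1 < p.2}

/-- The marked distance matrix space `ℝ₊^(ℕ choose 2) × I^ℕ`. -/
abbrev MDM (I : Type) : Type := (PairIdx → ℝ≥0) × (ℕ → I)

/-- `μinf` is the countable product `μ^⊗ℕ` of copies of `μ`: every finite-dimensional
cylinder has product measure. -/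
def IsProductMeasure {α : Type} [MeasurableSpace α] (μ : Measure α)
    (μinf : Measure (ℕ → α)) : Prop :=
  IsProbabilityMeasure μinf ∧
    ∀ (n : ℕ) (A : ℕ → Set α), (∀ i, MeasurableSet (A i)) →
      μinf {s | ∀ i < n, s i ∈ A i} = ∏ i ∈ Finset.range n, μ (A i)

/-- The marked distance matrix map `R^(X,r) : (X × I)^ℕ → ℝ₊^(ℕ choose 2) × I^ℕ`. -/
def distMatMap (X I : Type) [PseudoMetricSpace X] : (ℕ → X × I) → MDM I :=
  fun s => (fun p => nndist (s p.1.1).1 (s p.1.2).1, fun k => (s k).2)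

/-- The marked distance matrix distribution of `(X, r, μ)`, given the product measure
`μinf = μ^⊗ℕ` on `(X × I)^ℕ`: the pushforward of `μinf` under the distance matrix map. -/
def mDMD {X I : Type} [PseudoMetricSpace X] [MeasurableSpace X] [MeasurableSpace I]
    (μinf : Measure (ℕ → X × I)) : Measure (MDM I) :=
  μinf.map (distMatMap X I)

/-- The support of a measure on a metric space. -/
def metricSupport {α : Type} [PseudoMetricSpace α] [MeasurableSpace α] (μ : Measure α) :
    Set α := {x | ∀ ε > 0, 0 < μ (Metric.ball x ε)}

/-- Two marked metric measure spaces are equivalent (measure- and mark-preserving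
isometric). -/
def MMMEquiv {I X Y : Type} [MetricSpace I] [MetricSpace X] [MetricSpace Y]
    [MeasurableSpace I] [MeasurableSpace X] [MeasurableSpace Y]
    (μX : Measure (X × I)) (μY : Measure (Y × I)) : Prop :=
  ∃ φ : X → Y,
    Set.MapsTo φ (metricSupport (μX.map Prod.fst)) (metricSupport (μY.map Prod.fst)) ∧
    Measurable ((metricSupport (μX.map Prod.fst)).restrict φ) ∧
    (∀ x ∈ metricSupport (μX.map Prod.fst), ∀ x' ∈ metricSupport (μX.map Prod.fst),
      dist x x' = dist (φ x) (φ x')) ∧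
    μX.map (Prod.map φ id) = μY

/-- The sum metric `r_Z + r_I` on `Z × I`. -/
def pairDist {Z I : Type} [PseudoMetricSpace Z] [PseudoMetricSpace I] (p q : Z × I) : ℝ :=
  dist p.1 q.1 + dist p.2 q.2

/-- The Prohorov distance between two measures on `Z × I`, with respect to the
sum metric `r_Z + r_I`. -/
def prohorovDistSum {Z I : Type} [PseudoMetricSpace Z] [PseudoMetricSpace I]
    {m : MeasurableSpace (Z × I)} (μ ν : Measure (Z × I)) : ℝ :=
  sInf {ε : ℝ | 0 < ε ∧ ∀ A : Set (Z × I), MeasurableSet A →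
    μ A ≤ ν {q | ∃ p ∈ A, pairDist p q < ε} + ENNReal.ofReal ε ∧
    ν A ≤ μ {q | ∃ p ∈ A, pairDist p q < ε} + ENNReal.ofReal ε}

/-- The Prohorov distance between two measures on a metric space. -/
def prohorovDist {α : Type} [PseudoMetricSpace α] {m : MeasurableSpace α}
    (μ ν : Measure α) : ℝ :=
  sInf {ε : ℝ | 0 < ε ∧ ∀ A : Set α, MeasurableSet A →
    μ A ≤ ν {q | ∃ p ∈ A, dist p q < ε} + ENNReal.ofReal ε ∧
    ν A ≤ μ {q | ∃ p ∈ A, dist p q < ε} + ENNReal.ofReal ε}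

/-- The marked Gromov-Prohorov distance between two marked metric measure spaces. -/
def mGPDist {I X₁ X₂ : Type} [MetricSpace I] [MetricSpace X₁] [MetricSpace X₂]
    [MeasurableSpace I] [MeasurableSpace X₁] [MeasurableSpace X₂]
    (μ₁ : Measure (X₁ × I)) (μ₂ : Measure (X₂ × I)) : ℝ :=
  sInf {d : ℝ | ∃ (Z : Type) (_ : MetricSpace Z) (_ : MeasurableSpace Z),
    BorelSpace Z ∧ TopologicalSpace.SeparableSpace Z ∧ CompleteSpace Z ∧
    ∃ (φ₁ : X₁ → Z) (φ₂ : X₂ → Z), Isometry φ₁ ∧ Isometry φ₂ ∧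
      d = prohorovDistSum (μ₁.map (Prod.map φ₁ id)) (μ₂.map (Prod.map φ₂ id))}

/-- The (unmarked) Gromov-Prohorov distance between two metric measure spaces. -/
def uGPDist {X₁ X₂ : Type} [MetricSpace X₁] [MetricSpace X₂]
    [MeasurableSpace X₁] [MeasurableSpace X₂]
    (ν₁ : Measure X₁) (ν₂ : Measure X₂) : ℝ :=
  sInf {d : ℝ | ∃ (Z : Type) (_ : MetricSpace Z) (_ : MeasurableSpace Z),
    BorelSpace Z ∧ TopologicalSpace.SeparableSpace Z ∧ CompleteSpace Z ∧
    ∃ (φ₁ : X₁ → Z) (φ₂ : X₂ → Z), Isometry φ₁ ∧ Isometry φ₂ ∧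
      d = prohorovDist (ν₁.map φ₁) (ν₂.map φ₂)}

/-- Weak convergence of a sequence of (Borel) measures. -/
def WeakConvSeq {Ω : Type} [TopologicalSpace Ω] [MeasurableSpace Ω]
    (μs : ℕ → Measure Ω) (μ : Measure Ω) : Prop :=
  ∀ f : Ω →ᵇ ℝ, Tendsto (fun n => ∫ x, f x ∂(μs n)) atTop (𝓝 (∫ x, f x ∂μ))

/-- A function on the marked distance matrix space depends only on the distance
entries `r_{kl}` with `k < l ≤ n` and the first `n` mark coordinates. -/
def DependsOnFirst {I : Type} (n : ℕ) (φ : MDM I → ℝ) : Prop :=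
  ∀ a b : MDM I, (∀ p : PairIdx, p.1.2 < n → a.1 p = b.1 p) →
    (∀ k < n, a.2 k = b.2 k) → φ a = φ b

/-- The shift `ρ₁ⁿ` on the marked distance matrix space. -/
def shiftBy {I : Type} (n : ℕ) : MDM I → MDM I :=
  fun x => (fun p => x.1 ⟨(p.1.1 + n, p.1.2 + n), Nat.add_lt_add_right p.2 n⟩,
    fun k => x.2 (k + n))


/-- The (unmarked) distance matrix distribution of an mm-space `(X, r, ν)`, given the
product measure `νinf = ν^⊗ℕ` on `X^ℕ`. -/
def uDMD {X : Type} [PseudoMetricSpace X] [MeasurableSpace X] (νinf : Measure (ℕ → X)) :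
    Measure (PairIdx → ℝ≥0) :=
  νinf.map (fun s => fun p : PairIdx => nndist (s p.1.1) (s p.1.2))

theorem le_csInf_add_csInf {α : Type*} [ConditionallyCompleteLattice α] [AddGroup α]
    [AddLeftMono α] [AddRightMono α] {s t : Set α} {c : α} (hs : s.Nonempty) (ht : t.Nonempty)
    (h : ∀ a ∈ s, ∀ b ∈ t, c ≤ a + b) : c ≤ sInf s + sInf t := by
  have := hs.to_subtype
  have := ht.to_subtype
  rw [sInf_eq_iInf', sInf_eq_iInf']
  exact le_ciInf_add_ciInf fun a b => h a a.2 b b.2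

section Prohorov

variable {Z I G J : Type} [PseudoMetricSpace Z] [PseudoMetricSpace I]
  [PseudoMetricSpace G] [PseudoMetricSpace J]

theorem pairDist_triangle (p q r : Z × I) : pairDist p r ≤ pairDist p q + pairDist q r := by
  unfold pairDist
  linarith [dist_triangle p.1 q.1 r.1, dist_triangle p.2 q.2 r.2]

theorem continuous_pairDist_left (p : Z × I) : Continuous (pairDist p) :=
  (continuous_const.dist continuous_fst).add (continuous_const.dist continuous_snd)

def pairThickening (ε : ℝ) (A : Set (Z × I)) : Set (Z × I) :=
  {q | ∃ p ∈ A, pairDist p q < ε}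

theorem isOpen_pairThickening (ε : ℝ) (A : Set (Z × I)) : IsOpen (pairThickening ε A) := by
  have : pairThickening ε A = ⋃ p ∈ A, pairDist p ⁻¹' Set.Iio ε := by
    ext q
    simp [pairThickening]
  rw [this]
  exact isOpen_biUnion fun p _ => isOpen_Iio.preimage (continuous_pairDist_left p)

theorem pairThickening_pairThickening_subset (ε₁ ε₂ : ℝ) (A : Set (Z × I)) :
    pairThickening ε₂ (pairThickening ε₁ A) ⊆ pairThickening (ε₁ + ε₂) A := by
  rintro r ⟨q, ⟨p, hpA, hpq⟩, hqr⟩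
  exact ⟨p, hpA, (pairDist_triangle p q r).trans_lt (add_lt_add hpq hqr)⟩

theorem pairThickening_preimage_subset {f : Z × I → G × J}
    (hf : ∀ p q, pairDist (f p) (f q) ≤ pairDist p q) (ε : ℝ) (A : Set (G × J)) :
    pairThickening ε (f ⁻¹' A) ⊆ f ⁻¹' pairThickening ε A := by
  rintro q ⟨p, hpA, hpq⟩
  exact ⟨f p, hpA, (hf p q).trans_lt hpq⟩

def ProhorovLE {m : MeasurableSpace (Z × I)} (ε : ℝ) (μ ν : Measure (Z × I)) : Prop :=
  ∀ A, MeasurableSet A → μ A ≤ ν (pairThickening ε A) + ENNReal.ofReal ε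

theorem prohorovLE_one {m : MeasurableSpace (Z × I)} (μ ν : Measure (Z × I))
    [IsProbabilityMeasure μ] : ProhorovLE 1 μ ν := fun _ _ =>
  prob_le_one.trans (by rw [ENNReal.ofReal_one]; exact le_add_self)

theorem ProhorovLE.trans {m : MeasurableSpace (Z × I)} [OpensMeasurableSpace (Z × I)]
    {μ₁ μ₂ μ₃ : Measure (Z × I)} {ε₁ ε₂ : ℝ} (h₁₂ : ProhorovLE ε₁ μ₁ μ₂)
    (h₂₃ : ProhorovLE ε₂ μ₂ μ₃) (hε₁ : 0 ≤ ε₁) (hε₂ : 0 ≤ ε₂) :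
    ProhorovLE (ε₁ + ε₂) μ₁ μ₃ := fun A hA =>
  calc μ₁ A ≤ μ₂ (pairThickening ε₁ A) + ENNReal.ofReal ε₁ := h₁₂ A hA
    _ ≤ μ₃ (pairThickening ε₂ (pairThickening ε₁ A)) + ENNReal.ofReal ε₂
          + ENNReal.ofReal ε₁ := by
        gcongr
        exact h₂₃ _ (isOpen_pairThickening ε₁ A).measurableSet
    _ ≤ μ₃ (pairThickening (ε₁ + ε₂) A) + ENNReal.ofReal (ε₁ + ε₂) := by
        rw [ENNReal.ofReal_add hε₁ hε₂, add_assoc, add_comm (ENNReal.ofReal ε₂)]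
        gcongr
        exact pairThickening_pairThickening_subset ε₁ ε₂ A

theorem ProhorovLE.map {mZ : MeasurableSpace (Z × I)} {mG : MeasurableSpace (G × J)}
    {μ ν : Measure (Z × I)} {ε : ℝ} (h : ProhorovLE ε μ ν) {f : Z × I → G × J}
    (hf : Measurable f) (hf_dist : ∀ p q, pairDist (f p) (f q) ≤ pairDist p q) :
    ProhorovLE ε (μ.map f) (ν.map f) := fun A hA =>
  calc μ.map f A = μ (f ⁻¹' A) := Measure.map_apply hf hA
    _ ≤ ν (pairThickening ε (f ⁻¹' A)) + ENNReal.ofReal ε := h _ (hf hA)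
    _ ≤ ν (f ⁻¹' pairThickening ε A) + ENNReal.ofReal ε := by
        gcongr
        exact pairThickening_preimage_subset hf_dist ε A
    _ ≤ ν.map f (pairThickening ε A) + ENNReal.ofReal ε := by
        gcongr
        exact Measure.le_map_apply hf.aemeasurable _

def prohorovRadii {m : MeasurableSpace (Z × I)} (μ ν : Measure (Z × I)) : Set ℝ :=
  {ε | 0 < ε ∧ ProhorovLE ε μ ν ∧ ProhorovLE ε ν μ}

theorem prohorovDistSum_eq_sInf_prohorovRadii {m : MeasurableSpace (Z × I)}
    (μ ν : Measure (Z × I)) : prohorovDistSum μ ν = sInf (prohorovRadii μ ν) := by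
  simp only [prohorovDistSum, prohorovRadii, ProhorovLE, pairThickening, imp_and,
    forall_and]

theorem one_mem_prohorovRadii {m : MeasurableSpace (Z × I)} (μ ν : Measure (Z × I))
    [IsProbabilityMeasure μ] [IsProbabilityMeasure ν] : (1 : ℝ) ∈ prohorovRadii μ ν :=
  ⟨one_pos, prohorovLE_one μ ν, prohorovLE_one ν μ⟩

theorem bddBelow_prohorovRadii {m : MeasurableSpace (Z × I)} (μ ν : Measure (Z × I)) :
    BddBelow (prohorovRadii μ ν) :=
  ⟨0, fun _ hε => hε.1.le⟩

theorem prohorovDistSum_nonneg {m : MeasurableSpace (Z × I)} (μ ν : Measure (Z × I)) :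
    0 ≤ prohorovDistSum μ ν := by
  rw [prohorovDistSum_eq_sInf_prohorovRadii]
  exact Real.sInf_nonneg fun _ hε => hε.1.le

theorem prohorovDistSum_triangle {m : MeasurableSpace (Z × I)} [OpensMeasurableSpace (Z × I)]
    (μ₁ μ₂ μ₃ : Measure (Z × I)) [IsProbabilityMeasure μ₁] [IsProbabilityMeasure μ₂]
    [IsProbabilityMeasure μ₃] :
    prohorovDistSum μ₁ μ₃ ≤ prohorovDistSum μ₁ μ₂ + prohorovDistSum μ₂ μ₃ := by
  simp only [prohorovDistSum_eq_sInf_prohorovRadii]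
  refine le_csInf_add_csInf ⟨1, one_mem_prohorovRadii μ₁ μ₂⟩ ⟨1, one_mem_prohorovRadii μ₂ μ₃⟩ ?_
  rintro ε₁ ⟨hε₁, h₁₂, h₂₁⟩ ε₂ ⟨hε₂, h₂₃, h₃₂⟩
  refine csInf_le (bddBelow_prohorovRadii μ₁ μ₃) ⟨add_pos hε₁ hε₂, ?_, ?_⟩
  · exact h₁₂.trans h₂₃ hε₁.le hε₂.le
  · rw [add_comm]
    exact h₃₂.trans h₂₁ hε₂.le hε₁.le

theorem prohorovDistSum_map_le {mZ : MeasurableSpace (Z × I)} {mG : MeasurableSpace (G × J)}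
    (μ ν : Measure (Z × I)) [IsProbabilityMeasure μ] [IsProbabilityMeasure ν]
    {f : Z × I → G × J} (hf : Measurable f) (hf_dist : ∀ p q, pairDist (f p) (f q) ≤ pairDist p q) :
    prohorovDistSum (μ.map f) (ν.map f) ≤ prohorovDistSum μ ν := by
  simp only [prohorovDistSum_eq_sInf_prohorovRadii]
  exact csInf_le_csInf (bddBelow_prohorovRadii _ _) ⟨1, one_mem_prohorovRadii μ ν⟩
    fun ε ⟨hε, hμν, hνμ⟩ => ⟨hε, hμν.map hf hf_dist, hνμ.map hf hf_dist⟩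

end Prohorov

theorem Isometry.pairDist_prodMap {Z G I : Type} [PseudoMetricSpace Z] [PseudoMetricSpace G]
    [PseudoMetricSpace I] {ι : Z → G} (hι : Isometry ι) (p q : Z × I) :
    pairDist (Prod.map ι id p) (Prod.map ι id q) = pairDist p q := by
  simp [pairDist, hι.dist_eq]

instance Metric.GlueSpace.separableSpace {X Y Z : Type} [Nonempty Z] [MetricSpace Z]
    [MetricSpace X] [MetricSpace Y] [TopologicalSpace.SeparableSpace X]
    [TopologicalSpace.SeparableSpace Y] {Φ : Z → X} {Ψ : Z → Y} (hΦ : Isometry Φ)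
    (hΨ : Isometry Ψ) : TopologicalSpace.SeparableSpace (Metric.GlueSpace hΦ hΨ) := by
  rw [← TopologicalSpace.isSeparable_univ_iff]
  have hcover : Set.range (Metric.toGlueL hΦ hΨ) ∪ Set.range (Metric.toGlueR hΦ hΨ) =
      Set.univ := by
    refine Set.eq_univ_of_forall fun s => ?_
    obtain ⟨x | y, rfl⟩ := Quotient.exists_rep s
    · exact Or.inl ⟨x, rfl⟩
    · exact Or.inr ⟨y, rfl⟩
  rw [← hcover]
  exact (TopologicalSpace.isSeparable_range (Metric.toGlueL_isometry hΦ hΨ).continuous).union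
    (TopologicalSpace.isSeparable_range (Metric.toGlueR_isometry hΦ hΨ).continuous)

theorem exists_isometry_polish (Y : Type) [MetricSpace Y] [TopologicalSpace.SeparableSpace Y] :
    ∃ (G : Type) (_ : MetricSpace G) (_ : MeasurableSpace G), BorelSpace G ∧
      TopologicalSpace.SeparableSpace G ∧ CompleteSpace G ∧ ∃ ι : Y → G, Isometry ι := by
  let : MeasurableSpace (UniformSpace.Completion Y) := borel _
  exact ⟨UniformSpace.Completion Y, inferInstance, inferInstance, ⟨rfl⟩, inferInstance,
    inferInstance, (↑), UniformSpace.Completion.coe_isometry⟩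

theorem exists_isometry_pair_polish (X₁ X₂ : Type) [MetricSpace X₁] [MetricSpace X₂]
    [TopologicalSpace.SeparableSpace X₁] [TopologicalSpace.SeparableSpace X₂] :
    ∃ (Z : Type) (_ : MetricSpace Z) (_ : MeasurableSpace Z), BorelSpace Z ∧
      TopologicalSpace.SeparableSpace Z ∧ CompleteSpace Z ∧
      ∃ (φ₁ : X₁ → Z) (φ₂ : X₂ → Z), Isometry φ₁ ∧ Isometry φ₂ := by
  let := Metric.metricSpaceSum (X := X₁) (Y := X₂)
  obtain ⟨Z, _, _, hB, hS, hC, ι, hι⟩ := exists_isometry_polish (X₁ ⊕ X₂)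
  exact ⟨Z, _, _, hB, hS, hC, ι ∘ Sum.inl, ι ∘ Sum.inr, hι.comp Metric.isometry_inl,
    hι.comp Metric.isometry_inr⟩

theorem Isometry.measurable_prodMap_id {X Z I : Type} [PseudoMetricSpace X]
    [PseudoMetricSpace Z] [MeasurableSpace X] [OpensMeasurableSpace X] [MeasurableSpace Z]
    [BorelSpace Z] [MeasurableSpace I] {φ : X → Z} (hφ : Isometry φ) :
    Measurable (Prod.map φ (id : I → I)) :=
  hφ.continuous.measurable.prodMap measurable_id

theorem prohorovDistSum_map_isometry_comp_le {X₁ X₂ Z G I : Type} [MeasurableSpace X₁]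
    [MeasurableSpace X₂] [PseudoMetricSpace Z] [MeasurableSpace Z] [OpensMeasurableSpace Z]
    [PseudoMetricSpace G] [MeasurableSpace G] [BorelSpace G] [PseudoMetricSpace I]
    [MeasurableSpace I] (μ₁ : Measure (X₁ × I)) (μ₂ : Measure (X₂ × I))
    [IsProbabilityMeasure μ₁] [IsProbabilityMeasure μ₂] {φ₁ : X₁ → Z} {φ₂ : X₂ → Z}
    (hφ₁ : Measurable φ₁) (hφ₂ : Measurable φ₂) {ι : Z → G} (hι : Isometry ι) :
    prohorovDistSum (μ₁.map (Prod.map (ι ∘ φ₁) id)) (μ₂.map (Prod.map (ι ∘ φ₂) id))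
      ≤ prohorovDistSum (μ₁.map (Prod.map φ₁ id)) (μ₂.map (Prod.map φ₂ id)) := by
  have hφ₁I : Measurable (Prod.map φ₁ (id : I → I)) := hφ₁.prodMap measurable_id
  have hφ₂I : Measurable (Prod.map φ₂ (id : I → I)) := hφ₂.prodMap measurable_id
  have := Measure.isProbabilityMeasure_map hφ₁I.aemeasurable (μ := μ₁)
  have := Measure.isProbabilityMeasure_map hφ₂I.aemeasurable (μ := μ₂)
  have h := prohorovDistSum_map_le (μ₁.map (Prod.map φ₁ id)) (μ₂.map (Prod.map φ₂ id))
    hι.measurable_prodMap_id fun p q => (hι.pairDist_prodMap p q).le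
  rwa [Measure.map_map hι.measurable_prodMap_id hφ₁I,
    Measure.map_map hι.measurable_prodMap_id hφ₂I] at h

section MarkedGromovProhorov

variable {I X₁ X₂ : Type} [MetricSpace I] [MeasurableSpace I]
  [MetricSpace X₁] [MeasurableSpace X₁] [MetricSpace X₂] [MeasurableSpace X₂]
  {μ₁ : Measure (X₁ × I)} {μ₂ : Measure (X₂ × I)}

theorem mGPDist_le_prohorovDistSum {Z : Type} [MetricSpace Z] [MeasurableSpace Z] [BorelSpace Z]
    [TopologicalSpace.SeparableSpace Z] [CompleteSpace Z] {φ₁ : X₁ → Z} {φ₂ : X₂ → Z}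
    (hφ₁ : Isometry φ₁) (hφ₂ : Isometry φ₂) :
    mGPDist μ₁ μ₂ ≤ prohorovDistSum (μ₁.map (Prod.map φ₁ id)) (μ₂.map (Prod.map φ₂ id)) :=
  csInf_le ⟨0, by rintro _ ⟨_, _, _, _, _, _, _, _, _, _, rfl⟩; exact prohorovDistSum_nonneg _ _⟩
    ⟨Z, _, _, inferInstance, inferInstance, inferInstance, φ₁, φ₂, hφ₁, hφ₂, rfl⟩

-- An incomplete ambient space embeds isometrically into its completion.
theorem mGPDist_le_prohorovDistSum_of_separable [OpensMeasurableSpace X₁]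
    [OpensMeasurableSpace X₂] [IsProbabilityMeasure μ₁] [IsProbabilityMeasure μ₂]
    {Z : Type} [MetricSpace Z] [MeasurableSpace Z] [BorelSpace Z]
    [TopologicalSpace.SeparableSpace Z] {φ₁ : X₁ → Z} {φ₂ : X₂ → Z}
    (hφ₁ : Isometry φ₁) (hφ₂ : Isometry φ₂) :
    mGPDist μ₁ μ₂ ≤ prohorovDistSum (μ₁.map (Prod.map φ₁ id)) (μ₂.map (Prod.map φ₂ id)) := by
  obtain ⟨G, _, _, _, _, _, ι, hι⟩ := exists_isometry_polish Z
  exact (mGPDist_le_prohorovDistSum (hι.comp hφ₁) (hι.comp hφ₂)).trans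
    (prohorovDistSum_map_isometry_comp_le μ₁ μ₂ hφ₁.continuous.measurable
      hφ₂.continuous.measurable hι)

theorem mGPDist_le_prohorovDistSum_add {X₃ : Type} [MetricSpace X₃] [MeasurableSpace X₃]
    [OpensMeasurableSpace X₁] [OpensMeasurableSpace X₂] [OpensMeasurableSpace X₃]
    [OpensMeasurableSpace I] {μ₃ : Measure (X₃ × I)} [IsProbabilityMeasure μ₁]
    [IsProbabilityMeasure μ₂] [IsProbabilityMeasure μ₃]
    {Z : Type} [MetricSpace Z] [MeasurableSpace Z] [BorelSpace Z]
    [TopologicalSpace.SeparableSpace Z] {φ₁ : X₁ → Z} {φ₂ : X₂ → Z}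
    {W : Type} [MetricSpace W] [MeasurableSpace W] [BorelSpace W]
    [TopologicalSpace.SeparableSpace W] {ψ₂ : X₂ → W} {ψ₃ : X₃ → W}
    (hφ₁ : Isometry φ₁) (hφ₂ : Isometry φ₂) (hψ₂ : Isometry ψ₂) (hψ₃ : Isometry ψ₃) :
    mGPDist μ₁ μ₃ ≤ prohorovDistSum (μ₁.map (Prod.map φ₁ id)) (μ₂.map (Prod.map φ₂ id))
      + prohorovDistSum (μ₂.map (Prod.map ψ₂ id)) (μ₃.map (Prod.map ψ₃ id)) := by
  have : Nonempty X₂ := (nonempty_of_isProbabilityMeasure μ₂).map Prod.fst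
  let : MeasurableSpace (Metric.GlueSpace hφ₂ hψ₂) := borel _
  have : BorelSpace (Metric.GlueSpace hφ₂ hψ₂) := ⟨rfl⟩
  set ιZ := Metric.toGlueL hφ₂ hψ₂
  set ιW := Metric.toGlueR hφ₂ hψ₂
  have hιZ : Isometry ιZ := Metric.toGlueL_isometry hφ₂ hψ₂
  have hιW : Isometry ιW := Metric.toGlueR_isometry hφ₂ hψ₂
  have := Measure.isProbabilityMeasure_map (hιZ.comp hφ₁).measurable_prodMap_id.aemeasurable
    (μ := μ₁)
  have := Measure.isProbabilityMeasure_map (hιZ.comp hφ₂).measurable_prodMap_id.aemeasurable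
    (μ := μ₂)
  have := Measure.isProbabilityMeasure_map (hιW.comp hψ₃).measurable_prodMap_id.aemeasurable
    (μ := μ₃)
  calc mGPDist μ₁ μ₃
      ≤ prohorovDistSum (μ₁.map (Prod.map (ιZ ∘ φ₁) id)) (μ₃.map (Prod.map (ιW ∘ ψ₃) id)) :=
        mGPDist_le_prohorovDistSum_of_separable (hιZ.comp hφ₁) (hιW.comp hψ₃)
    _ ≤ prohorovDistSum (μ₁.map (Prod.map (ιZ ∘ φ₁) id)) (μ₂.map (Prod.map (ιZ ∘ φ₂) id))
          + prohorovDistSum (μ₂.map (Prod.map (ιW ∘ ψ₂) id))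
            (μ₃.map (Prod.map (ιW ∘ ψ₃) id)) := by
        rw [← Metric.toGlue_commute hφ₂ hψ₂]
        exact prohorovDistSum_triangle _ _ _
    _ ≤ _ := add_le_add
        (prohorovDistSum_map_isometry_comp_le μ₁ μ₂ hφ₁.continuous.measurable
          hφ₂.continuous.measurable hιZ)
        (prohorovDistSum_map_isometry_comp_le μ₂ μ₃ hψ₂.continuous.measurable
          hψ₃.continuous.measurable hιW)

end MarkedGromovProhorov

theorem mGPDist_triangle_general
    {I : Type} [MetricSpace I] [MeasurableSpace I] [BorelSpace I]
    {X₁ : Type} [MetricSpace X₁] [TopologicalSpace.SeparableSpace X₁]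
    [MeasurableSpace X₁] [BorelSpace X₁]
    {X₂ : Type} [MetricSpace X₂] [TopologicalSpace.SeparableSpace X₂]
    [MeasurableSpace X₂] [BorelSpace X₂]
    {X₃ : Type} [MetricSpace X₃] [TopologicalSpace.SeparableSpace X₃]
    [MeasurableSpace X₃] [BorelSpace X₃]
    (μ₁ : Measure (X₁ × I)) [IsProbabilityMeasure μ₁]
    (μ₂ : Measure (X₂ × I)) [IsProbabilityMeasure μ₂]
    (μ₃ : Measure (X₃ × I)) [IsProbabilityMeasure μ₃] :
    mGPDist μ₁ μ₃ ≤ mGPDist μ₁ μ₂ + mGPDist μ₂ μ₃ := by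
  refine le_csInf_add_csInf ?_ ?_ ?_
  · obtain ⟨Z, _, _, hB, hS, hC, φ₁, φ₂, hφ₁, hφ₂⟩ := exists_isometry_pair_polish X₁ X₂
    exact ⟨_, Z, _, _, hB, hS, hC, φ₁, φ₂, hφ₁, hφ₂, rfl⟩
  · obtain ⟨W, _, _, hB, hS, hC, ψ₂, ψ₃, hψ₂, hψ₃⟩ := exists_isometry_pair_polish X₂ X₃
    exact ⟨_, W, _, _, hB, hS, hC, ψ₂, ψ₃, hψ₂, hψ₃, rfl⟩
  · rintro _ ⟨Z, _, _, _, _, _, φ₁, φ₂, hφ₁, hφ₂, rfl⟩ _ ⟨W, _, _, _, _, _, ψ₂, ψ₃, hψ₂, hψ₃, rfl⟩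
    exact mGPDist_le_prohorovDistSum_add hφ₁ hφ₂ hψ₂ hψ₃

/-- the marked Gromov-Prohorov distance satisfies the triangle
inequality. -/
theorem mGPDist_triangle
    {I : Type} [MetricSpace I] [CompleteSpace I] [TopologicalSpace.SeparableSpace I]
    [MeasurableSpace I] [BorelSpace I]
    {X₁ : Type} [MetricSpace X₁] [CompleteSpace X₁] [TopologicalSpace.SeparableSpace X₁]
    [MeasurableSpace X₁] [BorelSpace X₁]
    {X₂ : Type} [MetricSpace X₂] [CompleteSpace X₂] [TopologicalSpace.SeparableSpace X₂]
    [MeasurableSpace X₂] [BorelSpace X₂]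
    {X₃ : Type} [MetricSpace X₃] [CompleteSpace X₃] [TopologicalSpace.SeparableSpace X₃]
    [MeasurableSpace X₃] [BorelSpace X₃]
    (μ₁ : Measure (X₁ × I)) [IsProbabilityMeasure μ₁]
    (μ₂ : Measure (X₂ × I)) [IsProbabilityMeasure μ₂]
    (μ₃ : Measure (X₃ × I)) [IsProbabilityMeasure μ₃] :
    mGPDist μ₁ μ₃ ≤ mGPDist μ₁ μ₂ + mGPDist μ₂ μ₃ :=
  mGPDist_triangle_general μ₁ μ₂ μ₃

end
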